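/- For any w ∈ C, the Fréchet normal cone satisfies N̂(w, C) = { y ∈ ℝ^d : y^i = 0 for all i ∈ I(w) ∪ J(w) }. -/

import Mathlib

open MeasureTheory Filter
open scoped Classical BigOperators

noncomputable section

/-- The closed `l∞`-ball of radius `r` centered at `0` in `ℝ^d`. -/
def Binf (d : ℕ) (r : ℝ) : Set (EuclideanSpace ℝ (Fin d)) := {z | ∀ i, |z i| ≤ r}

/-- The weighted group `l0`-norm constraint set
`C := {w : Σ_i p_i · 1_{w^i ≠ 0}(w) ≤ m}`, where the partition of coordinates into `n` blocks
is encoded by `blk : Fin d → Fin n` (coordinate `j` belongs to block `blk j`). -/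
def groupC (d n : ℕ) (blk : Fin d → Fin n) (p : Fin n → ℝ) (m : ℝ) :
    Set (EuclideanSpace ℝ (Fin d)) :=
  {w | (∑ i : Fin n, if ∃ j, blk j = i ∧ w j ≠ 0 then p i else 0) ≤ m}

/-- The Fréchet normal cone of `S` at `w`:
`N̂(w,S) = {y : limsup_{x → w, x ∈ S, x ≠ w} ⟨y, x−w⟩/‖x−w‖₂ ≤ 0}`, expressed in ε-δ form. -/
def frechetNormalCone {d : ℕ} (S : Set (EuclideanSpace ℝ (Fin d)))
    (w : EuclideanSpace ℝ (Fin d)) : Set (EuclideanSpace ℝ (Fin d)) :=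
  {y | ∀ ε > (0 : ℝ), ∃ δ > (0 : ℝ), ∀ x ∈ S, x ≠ w → ‖x - w‖ < δ →
    (inner ℝ y (x - w) : ℝ) ≤ ε * ‖x - w‖}

/-- The set of block indices whose block of `w` is nonzero: `I(w) := {i : w^i ≠ 0}`. -/
def blkSupport {d n : ℕ} (blk : Fin d → Fin n) (w : EuclideanSpace ℝ (Fin d)) :
    Set (Fin n) := {i | ∃ j, blk j = i ∧ w j ≠ 0}

/-- The aggregate penalty `Σ_{i ∈ I(w)} p_i` of the nonzero blocks of `w`. -/
def suppPenalty {d n : ℕ} (blk : Fin d → Fin n) (p : Fin n → ℝ)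
    (w : EuclideanSpace ℝ (Fin d)) : ℝ :=
  ∑ i : Fin n, if i ∈ blkSupport blk w then p i else 0

/-- `J(w) := {j ∉ I(w) : Σ_{i ∈ I(w)} p_i + p_j ≤ m}`, the blocks of `w` that are zero but are
not constrained to be. -/
def blkFree {d n : ℕ} (blk : Fin d → Fin n) (p : Fin n → ℝ) (m : ℝ)
    (w : EuclideanSpace ℝ (Fin d)) : Set (Fin n) :=
  {i | i ∉ blkSupport blk w ∧ suppPenalty blk p w + p i ≤ m}


/-! Near `w`, every point of `C` keeps the nonzero blocks of `w`, and the only blocks it can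
switch on are those of `J(w)`; hence `x - w` is supported on the blocks of `I(w) ∪ J(w)`, and a
`y` vanishing there is orthogonal to it. Conversely, for a coordinate `j` in a block of
`I(w) ∪ J(w)` the whole line `w + ℝ e_j` lies in `C`, which forces `⟪y, e_j⟫ = 0` for every `y`
in the normal cone. -/

open Topology

section IndicatorSums

variable {ι : Type*} [Fintype ι]

theorem sum_indicator_insert_of_notMem (p : ι → ℝ) {S : Set ι} {i : ι} (h : i ∉ S) :
    ∑ k, (insert i S).indicator p k = ∑ k, S.indicator p k + p i := by
  classical
  rw [Set.insert_eq, Set.indicator_union_of_disjoint (Set.disjoint_singleton_left.2 h),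
    Finset.sum_add_distrib, add_comm]
  simp [Set.indicator_apply]

theorem sum_indicator_le_of_subset {p : ι → ℝ} (hp : ∀ i, 0 ≤ p i) {S T : Set ι} (h : S ⊆ T) :
    ∑ k, S.indicator p k ≤ ∑ k, T.indicator p k :=
  Finset.sum_le_sum fun k _ => Set.indicator_le_indicator_of_subset h hp k

end IndicatorSums

section FrechetNormalCone

variable {d : ℕ} {S : Set (EuclideanSpace ℝ (Fin d))} {w y v : EuclideanSpace ℝ (Fin d)}

theorem inner_nonpos_of_mem_frechetNormalCone (hy : y ∈ frechetNormalCone S w)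
    (hS : ∀ᶠ t in 𝓝[>] (0 : ℝ), w + t • v ∈ S) : inner ℝ y v ≤ 0 := by
  rcases eq_or_ne v 0 with rfl | hv
  · simp
  have hv' : 0 < ‖v‖ := norm_pos_iff.2 hv
  refine le_of_forall_pos_le_add fun ε hε => ?_
  obtain ⟨δ, hδ, hδS⟩ := hy (ε / ‖v‖) (by positivity)
  have hsmall : ∀ᶠ t in 𝓝[>] (0 : ℝ), t * ‖v‖ < δ :=
    nhdsWithin_le_nhds <| (continuous_id.mul continuous_const).tendsto' 0 0 (by simp)
      |>.eventually (gt_mem_nhds hδ)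
  obtain ⟨t, ht, htS, htδ⟩ := (eventually_mem_nhdsWithin.and (hS.and hsmall)).exists
  have ht : 0 < t := ht
  have hnorm : ‖w + t • v - w‖ = t * ‖v‖ := by
    rw [add_sub_cancel_left, norm_smul, Real.norm_of_nonneg ht.le]
  have key := hδS _ htS (by simpa using ⟨ht.ne', hv⟩) (hnorm ▸ htδ)
  rw [hnorm, add_sub_cancel_left, inner_smul_right] at key
  have : t * inner ℝ y v ≤ t * ε := by
    calc t * inner ℝ y v ≤ ε / ‖v‖ * (t * ‖v‖) := key
      _ = t * ε := by field_simp
  simpa using le_of_mul_le_mul_left this ht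

theorem inner_eq_zero_of_forall_add_smul_mem (hy : y ∈ frechetNormalCone S w)
    (hS : ∀ t : ℝ, w + t • v ∈ S) : inner ℝ y v = 0 := by
  refine le_antisymm (inner_nonpos_of_mem_frechetNormalCone hy (.of_forall hS)) ?_
  have := inner_nonpos_of_mem_frechetNormalCone (v := -v) hy
    (.of_forall fun t => by simpa using hS (-t))
  rwa [inner_neg_right, neg_nonpos] at this

end FrechetNormalCone

section GroupSparsity

variable {d n : ℕ} {blk : Fin d → Fin n} {p : Fin n → ℝ} {m : ℝ}
  {w x y : EuclideanSpace ℝ (Fin d)} {i : Fin n}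

theorem mem_groupC_iff : x ∈ groupC d n blk p m ↔ suppPenalty blk p x ≤ m := by
  simp only [groupC, suppPenalty, blkSupport, Set.mem_ofPred]

theorem suppPenalty_eq_sum_indicator :
    suppPenalty blk p x = ∑ i, (blkSupport blk x).indicator p i :=
  rfl

theorem blkSupport_add_smul_single_subset (w : EuclideanSpace ℝ (Fin d)) (j : Fin d) (t : ℝ) :
    blkSupport blk (w + t • EuclideanSpace.single j 1) ⊆ insert (blk j) (blkSupport blk w) := by
  rintro _ ⟨k, rfl, hk⟩
  by_cases hkj : k = j
  · exact Or.inl (congrArg blk hkj)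
  · exact Or.inr ⟨k, rfl, by simpa [PiLp.single_apply, hkj] using hk⟩

theorem eventually_blkSupport_subset (w : EuclideanSpace ℝ (Fin d)) :
    ∀ᶠ x in 𝓝 w, blkSupport blk w ⊆ blkSupport blk x := by
  have : ∀ᶠ x in 𝓝 w, ∀ j, w j ≠ 0 → x j ≠ 0 :=
    eventually_all.2 fun j => eventually_imp_distrib_left.2 fun hj =>
      (PiLp.continuous_apply 2 _ j).continuousAt.eventually_ne hj
  filter_upwards [this] with x hx
  rintro _ ⟨j, rfl, hj⟩
  exact ⟨j, rfl, hx j hj⟩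

/-- `I(w) ∪ J(w)` consists of the blocks that can be switched on without leaving `C`. -/
theorem mem_blkSupport_or_blkFree_iff (hw : w ∈ groupC d n blk p m) :
    i ∈ blkSupport blk w ∨ i ∈ blkFree blk p m w ↔
      ∑ k, (insert i (blkSupport blk w)).indicator p k ≤ m := by
  by_cases hi : i ∈ blkSupport blk w
  · simpa [hi, Set.insert_eq_of_mem hi, ← suppPenalty_eq_sum_indicator] using mem_groupC_iff.1 hw
  · simp [hi, blkFree, sum_indicator_insert_of_notMem p hi, ← suppPenalty_eq_sum_indicator]

theorem mem_groupC_of_blkSupport_subset_insert (hp : ∀ i, 0 ≤ p i) (hw : w ∈ groupC d n blk p m)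
    (hi : i ∈ blkSupport blk w ∨ i ∈ blkFree blk p m w)
    (hx : blkSupport blk x ⊆ insert i (blkSupport blk w)) : x ∈ groupC d n blk p m :=
  mem_groupC_iff.2 <|
    (sum_indicator_le_of_subset hp hx).trans ((mem_blkSupport_or_blkFree_iff hw).1 hi)

theorem mem_blkSupport_or_blkFree_of_subset (hp : ∀ i, 0 ≤ p i) (hw : w ∈ groupC d n blk p m)
    (hx : x ∈ groupC d n blk p m) (hwx : blkSupport blk w ⊆ blkSupport blk x)
    (hi : i ∈ blkSupport blk x) : i ∈ blkSupport blk w ∨ i ∈ blkFree blk p m w :=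
  (mem_blkSupport_or_blkFree_iff hw).2 <|
    (sum_indicator_le_of_subset hp (Set.insert_subset hi hwx)).trans (mem_groupC_iff.1 hx)

theorem inner_sub_eq_zero_of_blkSupport_subset (hp : ∀ i, 0 ≤ p i)
    (hw : w ∈ groupC d n blk p m) (hx : x ∈ groupC d n blk p m)
    (hwx : blkSupport blk w ⊆ blkSupport blk x)
    (hy : ∀ i, (i ∈ blkSupport blk w ∨ i ∈ blkFree blk p m w) → ∀ j, blk j = i → y j = 0) :
    inner ℝ y (x - w) = 0 := by
  refine Finset.sum_eq_zero fun j _ => ?_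
  by_cases hxw : x j = w j
  · simp [hxw]
  · have hj : blk j ∈ blkSupport blk x := by
      by_cases hwj : w j = 0
      · exact ⟨j, rfl, by rwa [hwj] at hxw⟩
      · exact hwx ⟨j, rfl, hwj⟩
    simp [hy _ (mem_blkSupport_or_blkFree_of_subset hp hw hx hwx hj) j rfl]

end GroupSparsity

theorem frechet_normal_cone_C_general
    (d n : ℕ) (blk : Fin d → Fin n)
    (p : Fin n → ℝ) (hp : ∀ i, 0 < p i) (m : ℝ)
    (w : EuclideanSpace ℝ (Fin d)) (hw : w ∈ groupC d n blk p m) :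
    frechetNormalCone (groupC d n blk p m) w
      = {y : EuclideanSpace ℝ (Fin d) |
          ∀ i : Fin n, (i ∈ blkSupport blk w ∨ i ∈ blkFree blk p m w) →
            ∀ j : Fin d, blk j = i → y j = 0} := by
  have hp₀ : ∀ i, 0 ≤ p i := fun i => (hp i).le
  ext y
  constructor
  · rintro hy i hi j rfl
    have hline (t : ℝ) : w + t • EuclideanSpace.single j 1 ∈ groupC d n blk p m :=
      mem_groupC_of_blkSupport_subset_insert hp₀ hw hi (blkSupport_add_smul_single_subset w j t)
    simpa [EuclideanSpace.inner_single_right] using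
      inner_eq_zero_of_forall_add_smul_mem hy hline
  · intro hy ε hε
    obtain ⟨δ, hδ, hδw⟩ :=
      Metric.eventually_nhds_iff.1 (eventually_blkSupport_subset (blk := blk) w)
    refine ⟨δ, hδ, fun x hx _ hxδ => ?_⟩
    rw [inner_sub_eq_zero_of_blkSupport_subset hp₀ hw hx (hδw (by rwa [dist_eq_norm])) hy]
    positivity

/-- For any `w ∈ C`, the Fréchet normal cone satisfies
`N̂(w, C) = {y : y^i = 0 for all i ∈ I(w) ∪ J(w)}`. -/
theorem frechet_normal_cone_C
    (d n : ℕ) (blk : Fin d → Fin n) (hblk : Function.Surjective blk)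
    (p : Fin n → ℝ) (hp : ∀ i, 0 < p i) (m : ℝ) (hm : 0 < m)
    (w : EuclideanSpace ℝ (Fin d)) (hw : w ∈ groupC d n blk p m) :
    frechetNormalCone (groupC d n blk p m) w
      = {y : EuclideanSpace ℝ (Fin d) |
          ∀ i : Fin n, (i ∈ blkSupport blk w ∨ i ∈ blkFree blk p m w) →
            ∀ j : Fin d, blk j = i → y j = 0} :=
  frechet_normal_cone_C_general d n blk p hp m w hw
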